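/- There exists a computable real number α such that no primitive recursive function A : ℕ → ℚ satisfies |A(x) − α| ≤ 1/(x+1) for all x ∈ ℕ. In fact, if f : ℕ → {0,1} is any computable function that is not primitive recursive, then α = Σ_{n=0}^∞ f(n)/4ⁿ is such a real number. -/

import Mathlib

/-!
Write `α = ∑ f n / 4 ^ n` with `f n ∈ {0, 1}`. The integer part of `4 ^ n * α` is
`P n = ∑_{k ≤ n} f k * 4 ^ (n - k)`, so `P n % 4 = f n`, and the fractional part lies in
`[0, 1/3]`. Hence `P n / 4 ^ n` is a computable approximation of `α` with error `≤ 1 / (n + 1)`,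
while any `q` with `|q - α| ≤ 1 / 4 ^ (n + 1)` determines `P n = ⌊4 ^ n * |q| + 1/4⌋`. Querying a
primitive recursive approximation at `4 ^ (n + 1)` thus computes `f` primitive recursively.
A computable `f : ℕ → {0, 1}` that is not primitive recursive comes from diagonalizing against
the evaluation of codes with `rfind'` erased, which are total and cover all primitive recursive
functions.

The technical point is that `Primrec` on `ℚ` refers to `Denumerable ℚ`, which numbers a rational
by the rank of its `Rat.instEncodable` code among all such codes. Both this rank and its inverse
are primitive recursive: being a code is a gcd test, and the `n`-th code is at most the code of
the integer `n`.
-/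

/-- A real number is computable if some computable sequence of rationals
approximates it with error at most `1/(x+1)`. -/
def IsComputableReal (a : ℝ) : Prop :=
  ∃ A : ℕ → ℚ, Computable A ∧ ∀ x : ℕ, |(A x : ℝ) - a| ≤ 1 / ((x : ℝ) + 1)

open Encodable Denumerable

theorem Primrec.nat_pow : Primrec₂ ((· ^ ·) : ℕ → ℕ → ℕ) :=
  Primrec₂.unpaired'.1 Nat.Primrec.pow

theorem Primrec.nat_dvd : PrimrecRel ((· ∣ ·) : ℕ → ℕ → Prop) :=
  (Primrec.eq.comp (Primrec.nat_mod.comp Primrec.snd Primrec.fst) (Primrec.const 0)).of_eq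
    fun _ => Nat.dvd_iff_mod_eq_zero.symm

theorem Nat.gcd_eq_findGreatest (a b : ℕ) :
    Nat.gcd a b = Nat.findGreatest (fun c => c ∣ a ∧ c ∣ b) (a + b) := by
  refine (Nat.findGreatest_eq_iff.2 ⟨?_, fun _ => ⟨Nat.gcd_dvd_left a b, Nat.gcd_dvd_right a b⟩,
    fun c hc hcab ⟨hca, hcb⟩ => ?_⟩).symm
  · rcases Nat.eq_zero_or_pos a with rfl | ha
    · simp
    · exact (Nat.gcd_le_left b ha).trans (Nat.le_add_right a b)
  · have hpos : 0 < Nat.gcd a b := Nat.pos_of_ne_zero (by rw [Ne, Nat.gcd_eq_zero_iff]; omega)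
    have := Nat.le_of_dvd hpos (Nat.dvd_gcd hca hcb)
    omega

theorem Primrec.nat_gcd : Primrec₂ Nat.gcd :=
  (Primrec.nat_findGreatest (p := fun x c => c ∣ x.1 ∧ c ∣ x.2)
    (Primrec.nat_add.comp Primrec.fst Primrec.snd)
    (PrimrecPred.and (Primrec.nat_dvd.comp Primrec.snd (Primrec.fst.comp Primrec.fst))
      (Primrec.nat_dvd.comp Primrec.snd (Primrec.snd.comp Primrec.fst)))).of_eq
    fun p => (Nat.gcd_eq_findGreatest p.1 p.2).symm

theorem Primrec.int_natAbs : Primrec Int.natAbs := by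
  refine (Primrec.nat_div.comp (Primrec.succ.comp Primrec.encode) (Primrec.const 2)).of_eq
    fun z => ?_
  cases z with
  | ofNat n => show (2 * n + 1) / 2 = n; omega
  | negSucc n => show (2 * n + 1 + 1) / 2 = n + 1; omega

theorem Primrec.int_natCast : Primrec (Nat.cast : ℕ → ℤ) :=
  ((Primrec.ofNat ℤ).comp Primrec.nat_double).of_eq fun n => by
    rw [show 2 * n = encode (n : ℤ) from rfl, ofNat_encode]

theorem Primrec.nat_count {p : ℕ → Prop} [DecidablePred p] (hp : PrimrecPred p) :
    Primrec (Nat.count p) :=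
  (Primrec.nat_rec₁ 0 (Primrec.nat_add.comp Primrec.snd
    (Primrec.ite (hp.comp Primrec.fst) (Primrec.const 1) (Primrec.const 0))).to₂).of_eq
    fun n => by induction n <;> simp_all [Nat.count_succ]

theorem Nat.nth_le_of_strictMono {p : ℕ → Prop} {g : ℕ → ℕ} (hg : StrictMono g)
    (hpg : ∀ k, p (g k)) (n : ℕ) : Nat.nth p n ≤ g n :=
  Nat.nth_le_of_strictMonoOn_of_mapsTo g (fun k _ => hpg k) (hg.strictMonoOn _)

/-- The graph of `Nat.nth p` is `count p m = n ∧ p m`, and `g` bounds the search for `m`. -/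
theorem Primrec.nat_nth {p : ℕ → Prop} [DecidablePred p] (hp : PrimrecPred p) {g : ℕ → ℕ}
    (hg : Primrec g) (hgm : StrictMono g) (hpg : ∀ k, p (g k)) : Primrec (Nat.nth p) := by
  have hinf : (Set.ofPred p).Infinite := Set.infinite_of_injective_forall_mem hgm.injective hpg
  refine Primrec.of_graph ⟨g, hg, Nat.nth_le_of_strictMono hgm hpg⟩ ?_
  refine (PrimrecPred.and (hp.comp Primrec.snd)
    (Primrec.eq.comp ((Primrec.nat_count hp).comp Primrec.snd) Primrec.fst)).of_eq
    fun ⟨n, m⟩ => ?_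
  show p m ∧ Nat.count p m = n ↔ Nat.nth p n = m
  constructor
  · rintro ⟨hm, rfl⟩
    exact Nat.nth_count hm
  · rintro rfl
    exact ⟨Nat.nth_mem_of_infinite hinf _, Nat.count_nth_of_infinite hinf _⟩

/-- The encoding of `Rat.instEncodable`. It is not the `encode` that `Primrec` uses on `ℚ`: that
one comes from `Denumerable ℚ` and is the rank of `ratCode q` among all values of `ratCode`. -/
def ratCode (q : ℚ) : ℕ := Nat.pair (encode q.num) q.den

def IsRatCode (m : ℕ) : Prop :=
  0 < m.unpair.2 ∧ (ofNat ℤ m.unpair.1).natAbs.Coprime m.unpair.2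

instance : DecidablePred IsRatCode := fun _ => inferInstanceAs (Decidable (_ ∧ _))

theorem isRatCode_iff_mem_range (m : ℕ) : IsRatCode m ↔ m ∈ Set.range ratCode := by
  constructor
  · rintro ⟨hpos, hcop⟩
    refine ⟨⟨ofNat ℤ m.unpair.1, m.unpair.2, hpos.ne', hcop⟩, ?_⟩
    simp only [ratCode, encode_ofNat, Nat.pair_unpair]
  · rintro ⟨q, rfl⟩
    simpa only [IsRatCode, ratCode, Nat.unpair_pair, ofNat_encode] using ⟨q.den_pos, q.reduced⟩

theorem isRatCode_ratCode (q : ℚ) : IsRatCode (ratCode q) :=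
  (isRatCode_iff_mem_range _).2 ⟨q, rfl⟩

theorem primrecPred_isRatCode : PrimrecPred IsRatCode := by
  have hden := Primrec.snd.comp Primrec.unpair
  exact PrimrecPred.and (Primrec.nat_lt.comp (Primrec.const 0) hden)
    (Primrec.eq.comp (Primrec.nat_gcd.comp (Primrec.int_natAbs.comp
      ((Primrec.ofNat ℤ).comp (Primrec.fst.comp Primrec.unpair))) hden) (Primrec.const 1))

theorem count_ratCode_ofNat (n : ℕ) : Nat.count IsRatCode (ratCode (ofNat ℚ n)) = n := by
  have hcount (inst : DecidablePred (· ∈ Set.range ratCode)) (m : ℕ) :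
      Nat.count IsRatCode m = @Nat.count (· ∈ Set.range ratCode) inst m := by
    rw [Nat.count_eq_card_filter_range, Nat.count_eq_card_filter_range]
    simp only [isRatCode_iff_mem_range]
  -- `encode (ofNat ℚ n)` unfolds to such a count, with the instance `decidableRangeEncode ℚ`
  exact (hcount (decidableRangeEncode ℚ) _).trans (encode_ofNat (α := ℚ) n)

theorem ofNat_count_ratCode (q : ℚ) : ofNat ℚ (Nat.count IsRatCode (ratCode q)) = q := by
  obtain ⟨n, rfl⟩ : ∃ n, ofNat ℚ n = q := ⟨_, ofNat_encode q⟩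
  rw [count_ratCode_ofNat]

theorem ratCode_ofNat (n : ℕ) : ratCode (ofNat ℚ n) = Nat.nth IsRatCode n := by
  rw [← Nat.nth_count (isRatCode_ratCode (ofNat ℚ n)), count_ratCode_ofNat]

theorem primrec_ratCode : Primrec ratCode := by
  have hnth : Primrec (Nat.nth IsRatCode) :=
    Primrec.nat_nth primrecPred_isRatCode
      (Primrec₂.natPair.comp Primrec.nat_double (Primrec.const 1))
      (fun _ _ h => Nat.pair_lt_pair_left 1 (by omega))
      (fun n => isRatCode_ratCode n)
  exact (hnth.comp Primrec.encode).of_eq fun q => by rw [← ratCode_ofNat, ofNat_encode]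

theorem primrec_iff_ratCode {α : Type*} [Primcodable α] {f : α → ℚ} :
    Primrec f ↔ Primrec fun a => ratCode (f a) :=
  ⟨primrec_ratCode.comp, fun h =>
    ((Primrec.ofNat ℚ).comp ((Primrec.nat_count primrecPred_isRatCode).comp h)).of_eq
      fun a => ofNat_count_ratCode (f a)⟩

theorem Primrec.rat_num : Primrec Rat.num :=
  ((Primrec.ofNat ℤ).comp (Primrec.fst.comp (Primrec.unpair.comp primrec_ratCode))).of_eq
    fun q => by simp only [ratCode, Nat.unpair_pair, ofNat_encode]

theorem Primrec.rat_den : Primrec Rat.den :=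
  (Primrec.snd.comp (Primrec.unpair.comp primrec_ratCode)).of_eq fun q => by simp [ratCode]

theorem ratCode_natCast_div (a d : ℕ) (hd : d ≠ 0) :
    ratCode ((a : ℚ) / d) = Nat.pair (encode ((a / d.gcd a : ℕ) : ℤ)) (d / d.gcd a) := by
  have h := Rat.mkRat_eq_div a d
  push_cast at h
  rw [ratCode, ← h, Rat.num_mkRat, Rat.den_mkRat, if_neg hd, if_neg hd]
  simp

theorem Primrec.rat_natCast_div : Primrec₂ fun a d : ℕ => (a : ℚ) / d := by
  have hgcd := Primrec.nat_gcd.comp Primrec.snd Primrec.fst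
  refine primrec_iff_ratCode.2 ((Primrec.ite (Primrec.eq.comp Primrec.snd (Primrec.const 0))
    (Primrec.const (ratCode 0)) (Primrec₂.natPair.comp
      (Primrec.encode.comp (Primrec.int_natCast.comp (Primrec.nat_div.comp Primrec.fst hgcd)))
      (Primrec.nat_div.comp Primrec.snd hgcd))).of_eq fun ⟨a, d⟩ => ?_)
  rcases eq_or_ne d 0 with rfl | hd
  · simp
  · simp [hd, ratCode_natCast_div]

namespace Nat.Partrec.Code

def eraseRfind : Code → Code
  | pair cf cg => pair (eraseRfind cf) (eraseRfind cg)
  | comp cf cg => comp (eraseRfind cf) (eraseRfind cg)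
  | prec cf cg => prec (eraseRfind cf) (eraseRfind cg)
  | rfind' _ => zero
  | c => c

theorem primrec_eraseRfind : _root_.Primrec eraseRfind := by
  open _root_.Primrec in
  refine (primrec_recOn' .id (const zero) (const succ) (const left) (const right)
    (primrec₂_pair.comp (fst.comp (snd.comp (snd.comp snd)))
      (snd.comp (snd.comp (snd.comp snd)))).to₂
    (primrec₂_comp.comp (fst.comp (snd.comp (snd.comp snd)))
      (snd.comp (snd.comp (snd.comp snd)))).to₂
    (primrec₂_prec.comp (fst.comp (snd.comp (snd.comp snd)))
      (snd.comp (snd.comp (snd.comp snd)))).to₂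
    (const zero).to₂).of_eq fun c => ?_
  induction c <;> simp_all [eraseRfind]

theorem eval_eraseRfind_dom (c : Code) (n : ℕ) : (eval (eraseRfind c) n).Dom := by
  induction c generalizing n with
  | zero | succ | left | right | rfind' => trivial
  | pair cf cg ihf ihg => exact ⟨ihf n, ihg n⟩
  | comp cf cg ihf ihg => exact ⟨ihg n, ihf _⟩
  | prec cf cg ihf ihg =>
    simp only [eraseRfind, eval, Nat.unpaired]
    induction n.unpair.2 with
    | zero => exact ihf _
    | succ m ihm => exact ⟨ihm, ihg _⟩

def evalPrim (c : Code) (n : ℕ) : ℕ := (eval (eraseRfind c) n).get (eval_eraseRfind_dom c n)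

theorem computable₂_evalPrim : Computable₂ evalPrim :=
  (eval_part.comp (primrec_eraseRfind.to_comp.comp Computable.fst) Computable.snd).of_eq_tot
    fun _ => Part.get_mem _

theorem exists_evalPrim_eq {f : ℕ → ℕ} (hf : Nat.Primrec f) : ∃ c, evalPrim c = f := by
  suffices ∃ c, ∀ n, eval (eraseRfind c) n = Part.some (f n) from
    this.imp fun c hc => funext fun n => Part.get_eq_of_mem (by rw [hc]; exact Part.mem_some _) _
  induction hf with
  | zero => exact ⟨zero, fun _ => rfl⟩
  | succ => exact ⟨succ, fun _ => rfl⟩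
  | left => exact ⟨left, fun _ => rfl⟩
  | right => exact ⟨right, fun _ => rfl⟩
  | pair _ _ ihf ihg =>
    obtain ⟨cf, hcf⟩ := ihf
    obtain ⟨cg, hcg⟩ := ihg
    exact ⟨pair cf cg, fun n => by simp [eraseRfind, eval, hcf, hcg, Seq.seq]⟩
  | comp _ _ ihf ihg =>
    obtain ⟨cf, hcf⟩ := ihf
    obtain ⟨cg, hcg⟩ := ihg
    refine ⟨comp cf cg, fun n => ?_⟩
    simp only [eraseRfind, eval, hcg]
    exact (Part.bind_some _ _).trans (hcf _)
  | prec _ _ ihf ihg =>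
    obtain ⟨cf, hcf⟩ := ihf
    obtain ⟨cg, hcg⟩ := ihg
    refine ⟨prec cf cg, fun n => ?_⟩
    simp only [eraseRfind, eval, Nat.unpaired]
    induction n.unpair.2 with
    | zero => exact hcf _
    | succ m ihm =>
      simp only [ihm]
      exact (Part.bind_some _ _).trans (hcg _)

end Nat.Partrec.Code

open Nat.Partrec

def primDiagonal (n : ℕ) : ℕ := if (ofNat Code n).evalPrim n = 0 then 1 else 0

theorem primDiagonal_le_one (n : ℕ) : primDiagonal n ≤ 1 := by
  unfold primDiagonal
  split <;> simp

theorem computable_primDiagonal : Computable primDiagonal :=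
  (Primrec.ite (Primrec.eq.comp Primrec.id (Primrec.const 0)) (Primrec.const 1)
    (Primrec.const 0)).to_comp.comp
    (Code.computable₂_evalPrim.comp (Computable.ofNat Code) Computable.id)

theorem not_primrec_primDiagonal : ¬ Primrec primDiagonal := by
  intro h
  obtain ⟨c, hc⟩ := Code.exists_evalPrim_eq (Primrec.nat_iff.1 h)
  have hdiag := congrFun hc (encode c)
  rw [primDiagonal, ofNat_encode] at hdiag
  split at hdiag <;> omega

noncomputable def baseFourValue (f : ℕ → ℕ) : ℝ := ∑' n, (f n : ℝ) / 4 ^ n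

def baseFourPrefix (f : ℕ → ℕ) : ℕ → ℕ
  | 0 => f 0
  | n + 1 => 4 * baseFourPrefix f n + f (n + 1)

theorem baseFourValue_nonneg (f : ℕ → ℕ) : 0 ≤ baseFourValue f :=
  tsum_nonneg fun _ => by positivity

theorem computable_baseFourPrefix {f : ℕ → ℕ} (hf : Computable f) :
    Computable (baseFourPrefix f) := by
  refine (Computable.nat_rec Computable.id (hf.comp (Computable.const 0))
    (Primrec.nat_add.to_comp.comp (Primrec.nat_mul.to_comp.comp (Computable.const 4)
      (Computable.snd.comp Computable.snd)) (hf.comp (Computable.succ.comp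
        (Computable.fst.comp Computable.snd)))).to₂).of_eq fun n => ?_
  induction n with
  | zero => rfl
  | succ n ih =>
    simp only [id] at ih ⊢
    rw [ih, baseFourPrefix]

section

variable {f : ℕ → ℕ} (hf : ∀ n, f n ≤ 1)
include hf

theorem summable_baseFour : Summable fun n => (f n : ℝ) / 4 ^ n := by
  refine Summable.of_nonneg_of_le (fun n => by positivity) (fun n => ?_)
    (summable_geometric_of_lt_one (r := 1 / 4) (by norm_num) (by norm_num))
  rw [div_pow, one_pow]
  gcongr
  exact_mod_cast hf n

theorem baseFourValue_le : baseFourValue f ≤ 4 / 3 := by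
  calc baseFourValue f ≤ ∑' n : ℕ, (1 / 4 : ℝ) ^ n :=
        (summable_baseFour hf).tsum_le_tsum (fun n => by
          rw [div_pow, one_pow]; gcongr; exact_mod_cast hf n)
          (summable_geometric_of_lt_one (by norm_num) (by norm_num))
    _ = 4 / 3 := by rw [tsum_geometric_of_lt_one (by norm_num) (by norm_num)]; norm_num

theorem baseFourValue_eq_add : baseFourValue f = f 0 + baseFourValue (fun k => f (k + 1)) / 4 := by
  rw [baseFourValue, (summable_baseFour hf).tsum_eq_zero_add, baseFourValue, ← tsum_div_const]
  simp only [pow_zero, div_one, pow_succ, div_div]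

theorem four_pow_mul_baseFourValue (n : ℕ) :
    4 ^ n * baseFourValue f = baseFourPrefix f n + baseFourValue (fun k => f (k + n + 1)) / 4 := by
  induction n with
  | zero => simpa [baseFourPrefix] using baseFourValue_eq_add hf
  | succ n ih =>
    have h := baseFourValue_eq_add (f := fun k => f (k + n + 1)) fun k => hf _
    have hshift : (fun k => f (k + 1 + n + 1)) = fun k => f (k + (n + 1) + 1) :=
      funext fun k => by rw [Nat.add_right_comm k 1 n, Nat.add_assoc k n 1]
    rw [zero_add, hshift] at h
    rw [pow_succ, mul_comm _ (4 : ℝ), mul_assoc, ih, h, baseFourPrefix]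
    push_cast
    ring

theorem four_pow_mul_baseFourValue_sub_mem_Icc (n : ℕ) :
    4 ^ n * baseFourValue f - baseFourPrefix f n ∈ Set.Icc 0 (1 / 3) := by
  rw [four_pow_mul_baseFourValue hf n, add_sub_cancel_left]
  have h0 := baseFourValue_nonneg fun k => f (k + n + 1)
  have h1 := baseFourValue_le (f := fun k => f (k + n + 1)) fun k => hf _
  constructor <;> linarith

theorem baseFourPrefix_mod_four (n : ℕ) : baseFourPrefix f n % 4 = f n := by
  have := hf n
  cases n <;> simp only [baseFourPrefix] <;> omega

theorem abs_baseFourPrefix_div_sub_le (x : ℕ) :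
    |(baseFourPrefix f x : ℝ) / 4 ^ x - baseFourValue f| ≤ 1 / (x + 1) := by
  obtain ⟨hlo, hhi⟩ := four_pow_mul_baseFourValue_sub_mem_Icc hf x
  have h4 : (0 : ℝ) < 4 ^ x := by positivity
  have hx : (x : ℝ) + 1 ≤ 4 ^ x := by exact_mod_cast Nat.lt_pow_self (by norm_num : 1 < 4)
  have e : (baseFourPrefix f x : ℝ) / 4 ^ x - baseFourValue f =
      (baseFourPrefix f x - 4 ^ x * baseFourValue f) / 4 ^ x := by field_simp
  rw [e, abs_div, abs_of_pos h4, div_le_div_iff₀ h4 (by positivity), one_mul]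
  have hd : |(baseFourPrefix f x : ℝ) - 4 ^ x * baseFourValue f| ≤ 1 :=
    abs_le.2 ⟨by linarith, by linarith⟩
  nlinarith [abs_nonneg ((baseFourPrefix f x : ℝ) - 4 ^ x * baseFourValue f)]

theorem floor_four_pow_mul_add_eq {n : ℕ} {x : ℝ} (hx : |x - baseFourValue f| ≤ 1 / 4 ^ (n + 1)) :
    ⌊4 ^ n * x + 1 / 4⌋₊ = baseFourPrefix f n := by
  obtain ⟨hlo, hhi⟩ := four_pow_mul_baseFourValue_sub_mem_Icc hf n
  have hx' : |4 ^ n * x - 4 ^ n * baseFourValue f| ≤ 1 / 4 := by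
    rw [← mul_sub, abs_mul, abs_of_pos (by positivity)]
    calc 4 ^ n * |x - baseFourValue f| ≤ 4 ^ n * (1 / 4 ^ (n + 1)) := by gcongr
      _ = 1 / 4 := by rw [pow_succ]; field_simp
  obtain ⟨h1, h2⟩ := abs_le.1 hx'
  rw [Nat.floor_eq_iff (by linarith [(Nat.cast_nonneg (baseFourPrefix f n) : (0 : ℝ) ≤ _)])]
  constructor <;> linarith

theorem isComputableReal_baseFourValue (hc : Computable f) : IsComputableReal (baseFourValue f) :=
  ⟨fun x => (baseFourPrefix f x : ℚ) / (4 ^ x : ℕ),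
    Primrec.rat_natCast_div.to_comp.comp (computable_baseFourPrefix hc)
      (Primrec.nat_pow.comp (Primrec.const 4) Primrec.id).to_comp,
    fun x => by simpa using abs_baseFourPrefix_div_sub_le hf x⟩

end

/-- `⌊4 ^ n * |q| + 1/4⌋₊ % 4`, computed from the numerator and denominator of `q`. -/
def digitOfApprox (n : ℕ) (q : ℚ) : ℕ := (4 ^ (n + 1) * q.num.natAbs + q.den) / (4 * q.den) % 4

theorem primrec₂_digitOfApprox : Primrec₂ digitOfApprox :=
  Primrec.nat_mod.comp (Primrec.nat_div.comp (Primrec.nat_add.comp (Primrec.nat_mul.comp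
    (Primrec.nat_pow.comp (Primrec.const 4) (Primrec.succ.comp Primrec.fst))
    (Primrec.int_natAbs.comp (Primrec.rat_num.comp Primrec.snd)))
    (Primrec.rat_den.comp Primrec.snd))
    (Primrec.nat_mul.comp (Primrec.const 4) (Primrec.rat_den.comp Primrec.snd))) (Primrec.const 4)

theorem digitOfApprox_eq {f : ℕ → ℕ} (hf : ∀ n, f n ≤ 1) {n : ℕ} {q : ℚ}
    (hq : |(q : ℝ) - baseFourValue f| ≤ 1 / 4 ^ (n + 1)) : digitOfApprox n q = f n := by
  have habs : |(q : ℝ)| = q.num.natAbs / q.den := by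
    rw [Rat.cast_def, abs_div, Nat.abs_cast, Nat.cast_natAbs, Int.cast_abs]
  have hfloor : (4 ^ (n + 1) * q.num.natAbs + q.den) / (4 * q.den) =
      ⌊4 ^ n * |(q : ℝ)| + 1 / 4⌋₊ := by
    rw [← Nat.floor_div_eq_div (K := ℝ), habs]
    congr 1
    push_cast
    field_simp
    ring
  rw [digitOfApprox, hfloor, floor_four_pow_mul_add_eq hf, baseFourPrefix_mod_four hf]
  have h := abs_abs_sub_abs_le_abs_sub (q : ℝ) (baseFourValue f)
  rw [abs_of_nonneg (baseFourValue_nonneg f)] at h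
  exact h.trans hq

theorem primrec_of_primrec_approx {f : ℕ → ℕ} (hf : ∀ n, f n ≤ 1) {A : ℕ → ℚ} (hA : Primrec A)
    (hAf : ∀ x : ℕ, |(A x : ℝ) - baseFourValue f| ≤ 1 / ((x : ℝ) + 1)) : Primrec f :=
  (primrec₂_digitOfApprox.comp Primrec.id
    (hA.comp (Primrec.nat_pow.comp (Primrec.const 4) Primrec.succ))).of_eq fun n =>
    digitOfApprox_eq hf <| (hAf _).trans <| by
      simp only [id, Nat.succ_eq_add_one]
      push_cast
      gcongr
      linarith

theorem exists_computableReal_no_primrec_approx :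
    (∃ α : ℝ, IsComputableReal α ∧
      ¬ ∃ A : ℕ → ℚ, Primrec A ∧ ∀ x : ℕ, |(A x : ℝ) - α| ≤ 1 / ((x : ℝ) + 1)) ∧
    (∀ f : ℕ → ℕ, (∀ n, f n ≤ 1) → Computable f → ¬ Primrec f →
      IsComputableReal (∑' n : ℕ, (f n : ℝ) / 4 ^ n) ∧
      ¬ ∃ A : ℕ → ℚ, Primrec A ∧
        ∀ x : ℕ, |(A x : ℝ) - ∑' n : ℕ, (f n : ℝ) / 4 ^ n| ≤ 1 / ((x : ℝ) + 1)) := by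
  have key : ∀ f : ℕ → ℕ, (∀ n, f n ≤ 1) → Computable f → ¬ Primrec f →
      IsComputableReal (baseFourValue f) ∧ ¬ ∃ A : ℕ → ℚ, Primrec A ∧
        ∀ x : ℕ, |(A x : ℝ) - baseFourValue f| ≤ 1 / ((x : ℝ) + 1) :=
    fun f hf hc hnp => ⟨isComputableReal_baseFourValue hf hc,
      fun ⟨_, hA, hAf⟩ => hnp (primrec_of_primrec_approx hf hA hAf)⟩
  exact ⟨⟨_, key _ primDiagonal_le_one computable_primDiagonal not_primrec_primDiagonal⟩, key⟩
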